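/- arXiv:2111.01704 — 4 statements merged into one kernel-verified Lean document; each statement's English description precedes it below -/
import Mathlib

section
/- Let B₂ be a Boolean algebra, let B₀ ⊆ B₁ ⊆ B₂ be Boolean subalgebras, let I₂ be an ideal of B₂, and set I₁ = I₂ ∩ B₁ (an ideal of B₁). Suppose J₀ ⊆ B₁ is independent from B₀ modulo I₁ in B₁, and J₁ ⊆ B₂ is independent from B₁ modulo I₂ in B₂. Then J₀ ∪ J₁ is independent from B₀ modulo I₂ in B₂. -/
/-- A subset of a Boolean algebra closed under the Boolean operations and containing `⊥`
and `⊤`. -/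
def IsBooleanSubalgebra {B : Type*} [BooleanAlgebra B] (S : Set B) : Prop :=
  ⊥ ∈ S ∧ ⊤ ∈ S ∧ (∀ a ∈ S, ∀ b ∈ S, a ⊓ b ∈ S) ∧ (∀ a ∈ S, ∀ b ∈ S, a ⊔ b ∈ S) ∧
    ∀ a ∈ S, aᶜ ∈ S

/-- The Boolean subalgebra of `B` generated by a subset `X`. -/
def genBA {B : Type*} [BooleanAlgebra B] (X : Set B) : Set B :=
  ⋂₀ {S : Set B | IsBooleanSubalgebra S ∧ X ⊆ S}

/-- An ideal of a Boolean algebra: a nonempty subset that is downward closed and closed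
under binary joins. -/
def IsIdeal {B : Type*} [BooleanAlgebra B] (I : Set B) : Prop :=
  I.Nonempty ∧ (∀ a b : B, a ≤ b → b ∈ I → a ∈ I) ∧ ∀ a ∈ I, ∀ b ∈ I, a ⊔ b ∈ I

/-- `Y` is independent from `X` modulo `I` in the Boolean algebra `B` : for all finite
disjoint subsets `F₁, F₂` of `Y` and every element `a` of the Boolean subalgebra generated
by `X` with `a ∉ I`, the element `(⨅ y ∈ F₁, y) ⊓ (⨅ y ∈ F₂, yᶜ) ⊓ a` is not in `I`. -/
def IndepFrom {B : Type*} [BooleanAlgebra B] (Y X I : Set B) : Prop :=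
  ∀ F₁ F₂ : Finset B, ↑F₁ ⊆ Y → ↑F₂ ⊆ Y → Disjoint F₁ F₂ →
    ∀ a ∈ genBA X, a ∉ I → (F₁.inf id ⊓ F₂.inf (fun y => yᶜ) ⊓ a) ∉ I

/-!
Split the minterm `⨅ F₁ ⊓ ⨅ F₂ᶜ` along `J₀`. The `J₀`-part met with `a` is an element `b`
of `B₁` outside `I₂`, by independence of `J₀` over `B₀` modulo `I₂ ∩ B₁`. The `J₁`-part met
with `b` then lies outside `I₂` by independence of `J₁` over `B₁`, and it is the original
minterm met with `a`.
-/

theorem Finset.inf_filter_inf_inf_filter_not {α β : Type*} [SemilatticeInf β] [OrderTop β]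
    (s : Finset α) (f : α → β) (p : α → Prop) [DecidablePred p] :
    (s.filter p).inf f ⊓ (s.filter (¬p ·)).inf f = s.inf f := by
  classical
  rw [← Finset.inf_union, Finset.filter_union_filter_not_eq]

theorem Finset.coe_filter_notMem_subset {α : Type*} {J K : Set α} [DecidablePred (· ∈ J)]
    {F : Finset α} (hF : ↑F ⊆ J ∪ K) : ↑(F.filter (· ∉ J)) ⊆ K := fun _ hy =>
  (hF (Finset.mem_filter.1 hy).1).resolve_left (Finset.mem_filter.1 hy).2

section

variable {B : Type*} [BooleanAlgebra B]

theorem genBA_subset {X S : Set B} (hS : IsBooleanSubalgebra S) (hXS : X ⊆ S) :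
    genBA X ⊆ S :=
  Set.sInter_subset_of_mem ⟨hS, hXS⟩

theorem subset_genBA (X : Set B) : X ⊆ genBA X :=
  fun _ hx => Set.mem_sInter.2 fun _ hS => hS.2 hx

def minterm (F₁ F₂ : Finset B) : B :=
  F₁.inf id ⊓ F₂.inf (fun y => yᶜ)

theorem minterm_eq_inf_filter (F₁ F₂ : Finset B) (p : B → Prop) [DecidablePred p] :
    minterm F₁ F₂ =
      minterm (F₁.filter p) (F₂.filter p) ⊓ minterm (F₁.filter (¬p ·)) (F₂.filter (¬p ·)) := by
  rw [minterm, minterm, minterm, ← Finset.inf_filter_inf_inf_filter_not F₁ _ p,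
    ← Finset.inf_filter_inf_inf_filter_not F₂ _ p]
  ac_rfl

namespace IsBooleanSubalgebra

variable {S : Set B} (hS : IsBooleanSubalgebra S)
include hS

theorem inf_mem {a b : B} (ha : a ∈ S) (hb : b ∈ S) : a ⊓ b ∈ S :=
  hS.2.2.1 a ha b hb

theorem finset_inf_mem {ι : Type*} (F : Finset ι) {f : ι → B} (hf : ∀ i ∈ F, f i ∈ S) :
    F.inf f ∈ S :=
  Finset.inf_induction hS.2.1 (fun _ ha _ hb => hS.inf_mem ha hb) hf

theorem compl_mem {a : B} (ha : a ∈ S) : aᶜ ∈ S :=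
  hS.2.2.2.2 a ha

theorem minterm_mem {F₁ F₂ : Finset B} (h₁ : ↑F₁ ⊆ S) (h₂ : ↑F₂ ⊆ S) : minterm F₁ F₂ ∈ S :=
  hS.inf_mem (hS.finset_inf_mem F₁ fun _ hy => h₁ hy)
    (hS.finset_inf_mem F₂ fun _ hy => hS.compl_mem (h₂ hy))

end IsBooleanSubalgebra

end

theorem indepFrom_union_trans_general {B₂ : Type*} [BooleanAlgebra B₂]
    (B0 B1 : Set B₂) (hB1 : IsBooleanSubalgebra B1)
    (hB01 : B0 ⊆ B1)
    (I₂ : Set B₂)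
    (J₀ J₁ : Set B₂) (hJ₀ : J₀ ⊆ B1)
    (hind₀ : IndepFrom J₀ B0 (I₂ ∩ B1))
    (hind₁ : IndepFrom J₁ B1 I₂) :
    IndepFrom (J₀ ∪ J₁) B0 I₂ := by
  classical
  intro F₁ F₂ hF₁ hF₂ hdisj a ha haI
  have hG₁ : ↑(F₁.filter (· ∈ J₀)) ⊆ J₀ := fun _ hy => (Finset.mem_filter.1 hy).2
  have hG₂ : ↑(F₂.filter (· ∈ J₀)) ⊆ J₀ := fun _ hy => (Finset.mem_filter.1 hy).2
  set b := minterm (F₁.filter (· ∈ J₀)) (F₂.filter (· ∈ J₀)) ⊓ a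
  have hbB1 : b ∈ B1 :=
    hB1.inf_mem (hB1.minterm_mem (hG₁.trans hJ₀) (hG₂.trans hJ₀)) (genBA_subset hB1 hB01 ha)
  have hbI : b ∉ I₂ := fun hb =>
    hind₀ _ _ hG₁ hG₂ (hdisj.mono (Finset.filter_subset _ _) (Finset.filter_subset _ _)) a ha
      (fun h => haI h.1) ⟨hb, hbB1⟩
  have hminterm : minterm (F₁.filter (· ∉ J₀)) (F₂.filter (· ∉ J₀)) ⊓ b ∉ I₂ :=
    hind₁ _ _ (Finset.coe_filter_notMem_subset hF₁) (Finset.coe_filter_notMem_subset hF₂)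
      (hdisj.mono (Finset.filter_subset _ _) (Finset.filter_subset _ _)) b
      (subset_genBA B1 hbB1) hbI
  change minterm F₁ F₂ ⊓ a ∉ I₂
  rwa [minterm_eq_inf_filter F₁ F₂ (· ∈ J₀), inf_comm (minterm _ _), inf_assoc]

/-- Two-step transitivity of independence: if `J₀ ⊆ B₁` is independent from the subalgebra
`B₀` modulo `I₂ ∩ B₁`, and `J₁` is independent from `B₁` modulo `I₂`, then `J₀ ∪ J₁` is
independent from `B₀` modulo `I₂`. -/
theorem indepFrom_union_trans {B₂ : Type*} [BooleanAlgebra B₂]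
    (B0 B1 : Set B₂) (hB0 : IsBooleanSubalgebra B0) (hB1 : IsBooleanSubalgebra B1)
    (hB01 : B0 ⊆ B1)
    (I₂ : Set B₂) (hI₂ : IsIdeal I₂)
    (J₀ J₁ : Set B₂) (hJ₀ : J₀ ⊆ B1)
    (hind₀ : IndepFrom J₀ B0 (I₂ ∩ B1))
    (hind₁ : IndepFrom J₁ B1 I₂) :
    IndepFrom (J₀ ∪ J₁) B0 I₂ :=
  indepFrom_union_trans_general B0 B1 hB1 hB01 I₂ J₀ J₁ hJ₀ hind₀ hind₁
end

section
/- Let A, B, C be Boolean algebras and let f : C → A and g : C → B be injective Boolean algebra homomorphisms. Then there exist a Boolean algebra D and injective Boolean algebra homomorphisms i₁ : A → D and i₂ : B → D with i₁ ∘ f = i₂ ∘ g such that the intersection of the range of i₁ with the range of i₂ equals the range of i₁ ∘ f. (Boolean algebras have disjoint amalgamation.) -/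
/-!
Send `a : A` and `b : B` to sets of pairs `(x, y)` of points (homomorphisms to `Prop`) of `A`
and `B` that agree on `C`: `a ↦ {(x, y) | x a}` and `b ↦ {(x, y) | y b}`. By the prime ideal
theorem a point of `C` extends along an injective homomorphism, so every point of `A` and every
point of `B` occurs in such a pair, and points separate elements; hence both maps are injective.
If `a` and `b` have the same image, then `x a → y b` for every compatible pair. Were there no
`c` with `a ≤ f c` and `g c ≤ b`, the filter `{c | a ≤ f c}` and the ideal `{c | g c ≤ b}` would
be disjoint, and a point of `C` separating them would extend to a compatible pair with `x a` and
`¬ y b`. Interpolating in both directions and using injectivity of `g` gives `a = f c`.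
-/

universe u v w

namespace Order

namespace Ideal

variable {F α β : Type*} [FunLike F α β]

section

variable [SemilatticeSup α] [OrderBot α] [SemilatticeSup β] [OrderBot β] [SupBotHomClass F α β]

def comap (g : F) (I : Ideal β) : Ideal α :=
  IsIdeal.toIdeal
    { IsLowerSet := fun _ _ hle hb => I.lower (OrderHomClass.mono g hle) hb
      Nonempty := ⟨⊥, show g ⊥ ∈ I by rw [map_bot]; exact I.bot_mem⟩
      Directed := fun a ha b hb =>
        ⟨a ⊔ b, show g (a ⊔ b) ∈ I by rw [map_sup]; exact sup_mem ha hb, le_sup_left,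
          le_sup_right⟩ }

def map (g : F) (I : Ideal α) : Ideal β :=
  IsIdeal.toIdeal (I := {b | ∃ c ∈ I, b ≤ g c})
    { IsLowerSet := fun _ _ hle ⟨c, hc, hbc⟩ => ⟨c, hc, hle.trans hbc⟩
      Nonempty := ⟨⊥, ⊥, I.bot_mem, bot_le⟩
      Directed := fun _ ⟨c, hc, hbc⟩ _ ⟨d, hd, hbd⟩ =>
        ⟨g (c ⊔ d), ⟨c ⊔ d, sup_mem hc hd, le_rfl⟩, hbc.trans (OrderHomClass.mono g le_sup_left),
          hbd.trans (OrderHomClass.mono g le_sup_right)⟩ }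

end

def IsPrime.toBoundedLatticeHom [Lattice α] [BoundedOrder α] {J : Ideal α} (hJ : J.IsPrime) :
    BoundedLatticeHom α Prop where
  toFun a := a ∉ J
  map_sup' a b := propext <| by rw [sup_mem_iff, not_and_or]; rfl
  map_inf' a b := propext
    ⟨fun h => ⟨fun ha => h (J.lower inf_le_left ha), fun hb => h (J.lower inf_le_right hb)⟩,
      fun h hab => (hJ.mem_or_mem hab).elim h.1 h.2⟩
  map_top' := propext ⟨fun _ => trivial, fun _ => hJ.top_notMem⟩
  map_bot' := propext ⟨fun h => h J.bot_mem, False.elim⟩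

end Ideal

namespace PFilter

variable {F α β : Type*} [FunLike F α β]
  [SemilatticeInf α] [OrderTop α] [SemilatticeInf β] [OrderTop β] [InfTopHomClass F α β]

def comap (g : F) (P : PFilter β) : PFilter α :=
  IsPFilter.toPFilter <| IsPFilter.of_def ⟨⊤, show g ⊤ ∈ P by rw [map_top]; exact P.top_mem⟩
    (fun a ha b hb =>
      ⟨a ⊓ b, show g (a ⊓ b) ∈ P by rw [map_inf]; exact P.inf_mem ha hb, inf_le_left, inf_le_right⟩)
    (fun hle ha => P.mem_of_le (OrderHomClass.mono g hle) ha)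

end PFilter

end Order

open Order

namespace BoundedLatticeHom

section DistribLattice

variable {α : Type*} [DistribLattice α] [BoundedOrder α]

theorem exists_prop_of_disjoint {P : PFilter α} {I : Order.Ideal α} (h : Disjoint (P : Set α) I) :
    ∃ x : BoundedLatticeHom α Prop, (∀ a ∈ P, x a) ∧ ∀ a ∈ I, ¬ x a := by
  obtain ⟨J, hJ, hIJ, hPJ⟩ := DistribLattice.prime_ideal_of_disjoint_filter_ideal h
  exact ⟨hJ.toBoundedLatticeHom, fun a ha haJ => hPJ.ne_of_mem ha haJ rfl,
    fun a ha haJ => haJ (hIJ ha)⟩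

theorem le_of_forall_prop {a b : α} (h : ∀ x : BoundedLatticeHom α Prop, x a → x b) : a ≤ b := by
  by_contra hab
  have hdisj : Disjoint (PFilter.principal a : Set α) (Order.Ideal.principal b) :=
    Set.disjoint_left.2 fun c hac hcb => hab (le_trans hac hcb)
  obtain ⟨x, hxa, hxb⟩ := exists_prop_of_disjoint hdisj
  exact hxb b le_rfl (h x (hxa a le_rfl))

def ofPoints {Z : Type*} (e : Z → BoundedLatticeHom α Prop) : BoundedLatticeHom α (Set Z) where
  toFun a := {z | e z a}
  map_sup' a b := Set.ext fun z => iff_of_eq (map_sup (e z) a b)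
  map_inf' a b := Set.ext fun z => iff_of_eq (map_inf (e z) a b)
  map_top' := Set.ext fun z => iff_of_eq (map_top (e z))
  map_bot' := Set.ext fun z => iff_of_eq (map_bot (e z))

@[simp] theorem mem_ofPoints {Z : Type*} {e : Z → BoundedLatticeHom α Prop} {a : α} {z : Z} :
    z ∈ ofPoints e a ↔ e z a :=
  Iff.rfl

theorem ofPoints_injective {Z : Type*} {e : Z → BoundedLatticeHom α Prop}
    (he : Function.Surjective e) : Function.Injective (ofPoints e) := by
  intro a b hab
  have hiff (x : BoundedLatticeHom α Prop) : x a ↔ x b := by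
    obtain ⟨z, rfl⟩ := he x
    rw [← mem_ofPoints (e := e), hab, mem_ofPoints]
  exact le_antisymm (le_of_forall_prop fun x => (hiff x).1) (le_of_forall_prop fun x => (hiff x).2)

end DistribLattice

theorem eq_of_forall_imp {α : Type*} [BooleanAlgebra α] {u v : BoundedLatticeHom α Prop}
    (h : ∀ a, u a → v a) : u = v := by
  ext a
  refine ⟨h a, fun hva => by_contra fun hua => ?_⟩
  have hvac : v aᶜ := h _ (by rw [map_compl']; exact hua)
  rw [map_compl'] at hvac
  exact hvac hva

variable {B C : Type*} [DistribLattice B] [BoundedOrder B] [BooleanAlgebra C]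

theorem exists_comp_eq_of_forall_le (g : BoundedLatticeHom C B) (u : BoundedLatticeHom C Prop)
    (b : B) (h : ∀ c, b ≤ g c → u c) : ∃ y : BoundedLatticeHom B Prop, y b ∧ y.comp g = u := by
  -- `comap u (principal ⊥)` is the kernel `{c | ¬ u c}` of `u`.
  have hdisj : Disjoint (PFilter.principal b : Set B)
      (Order.Ideal.map g (Order.Ideal.comap u (Order.Ideal.principal ⊥))) := by
    refine Set.disjoint_left.2 fun w hbw ⟨c, hc, hwc⟩ => ?_
    exact hc (h c ((PFilter.mem_principal.1 hbw).trans hwc))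
  obtain ⟨y, hyb, hyker⟩ := exists_prop_of_disjoint hdisj
  refine ⟨y, hyb b le_rfl, eq_of_forall_imp fun c hyc => by_contra fun huc => ?_⟩
  exact hyker (g c) ⟨c, huc, le_rfl⟩ hyc

theorem exists_comp_eq_of_injective {g : BoundedLatticeHom C B} (hg : Function.Injective g)
    (u : BoundedLatticeHom C Prop) : ∃ y : BoundedLatticeHom B Prop, y.comp g = u := by
  obtain ⟨y, -, hy⟩ := exists_comp_eq_of_forall_le g u ⊤ fun c hc => by
    rw [hg ((top_le_iff.1 hc).trans (map_top g).symm), map_top]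
    trivial
  exact ⟨y, hy⟩

end BoundedLatticeHom

section Amalgamation

variable {A B C : Type*} [BooleanAlgebra A] [BooleanAlgebra B] [BooleanAlgebra C]

theorem BoundedLatticeHom.exists_interpolant (f : BoundedLatticeHom C A)
    (g : BoundedLatticeHom C B) {a : A} {b : B}
    (h : ∀ (x : BoundedLatticeHom A Prop) (y : BoundedLatticeHom B Prop),
      x.comp f = y.comp g → x a → y b) :
    ∃ c, a ≤ f c ∧ g c ≤ b := by
  by_contra! hne
  have hdisj : Disjoint (PFilter.comap f (PFilter.principal a) : Set C)
      (Order.Ideal.comap g (Order.Ideal.principal b)) :=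
    Set.disjoint_left.2 hne
  obtain ⟨u, hua, hub⟩ := exists_prop_of_disjoint hdisj
  obtain ⟨x, hxa, hxu⟩ := exists_comp_eq_of_forall_le f u a hua
  obtain ⟨y, hyb, hyu⟩ := exists_comp_eq_of_forall_le g u bᶜ fun c hc => by
    have hgc : g cᶜ ≤ b := by rw [map_compl']; exact compl_le_iff_compl_le.1 hc
    have hnuc : ¬ u cᶜ := hub cᶜ hgc
    rw [map_compl'] at hnuc
    exact not_not.1 hnuc
  rw [map_compl'] at hyb
  exact hyb (h x y (hxu.trans hyu.symm) hxa)

theorem BoundedLatticeHom.exists_eq_of_forall_iff {f : BoundedLatticeHom C A}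
    {g : BoundedLatticeHom C B} (hg : Function.Injective g) {a : A} {b : B}
    (h : ∀ (x : BoundedLatticeHom A Prop) (y : BoundedLatticeHom B Prop),
      x.comp f = y.comp g → (x a ↔ y b)) :
    ∃ c, f c = a := by
  obtain ⟨c, hac, hcb⟩ := exists_interpolant f g fun x y hxy => (h x y hxy).1
  obtain ⟨d, hbd, hda⟩ := exists_interpolant g f fun y x hyx => (h x y hyx.symm).2
  have hcd : c ≤ d := (orderEmbeddingOfInjective g hg).le_iff_le.1 (hcb.trans hbd)
  exact ⟨c, le_antisymm ((OrderHomClass.mono f hcd).trans hda) hac⟩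

variable (f : BoundedLatticeHom C A) (g : BoundedLatticeHom C B)

def CompatiblePoints : Type _ :=
  {p : BoundedLatticeHom A Prop × BoundedLatticeHom B Prop // p.1.comp f = p.2.comp g}

variable {f g}

theorem CompatiblePoints.fst_surjective (hg : Function.Injective g) :
    Function.Surjective fun p : CompatiblePoints f g => p.1.1 := fun x =>
  let ⟨y, hy⟩ := BoundedLatticeHom.exists_comp_eq_of_injective hg (x.comp f)
  ⟨⟨(x, y), hy.symm⟩, rfl⟩

theorem CompatiblePoints.snd_surjective (hf : Function.Injective f) :
    Function.Surjective fun p : CompatiblePoints f g => p.1.2 := fun y =>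
  let ⟨x, hx⟩ := BoundedLatticeHom.exists_comp_eq_of_injective hf (y.comp g)
  ⟨⟨(x, y), hx⟩, rfl⟩

end Amalgamation

/-- Boolean algebras have disjoint amalgamation: two injective homomorphisms out of a
common Boolean algebra `C` can be amalgamated by injective homomorphisms into a Boolean
algebra `D` whose images intersect exactly in the image of `C`. -/
theorem boolean_algebra_disjoint_amalgamation
    {A : Type u} {B : Type v} {C : Type w}
    [BooleanAlgebra A] [BooleanAlgebra B] [BooleanAlgebra C]
    (f : BoundedLatticeHom C A) (g : BoundedLatticeHom C B)
    (hf : Function.Injective f) (hg : Function.Injective g) :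
    ∃ (D : Type (max u v w)) (_ : BooleanAlgebra D)
      (i₁ : BoundedLatticeHom A D) (i₂ : BoundedLatticeHom B D),
      Function.Injective i₁ ∧ Function.Injective i₂ ∧
      (∀ c : C, i₁ (f c) = i₂ (g c)) ∧
      Set.range ⇑i₁ ∩ Set.range ⇑i₂ = Set.range fun c : C => i₁ (f c) := by
  let Z := ULift.{w} (CompatiblePoints f g)
  let i₁ := BoundedLatticeHom.ofPoints fun z : Z => z.down.1.1
  let i₂ := BoundedLatticeHom.ofPoints fun z : Z => z.down.1.2
  have hcomm (c : C) : i₁ (f c) = i₂ (g c) :=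
    Set.ext fun z => iff_of_eq (DFunLike.congr_fun z.down.2 c)
  refine ⟨Set Z, inferInstance, i₁, i₂,
    BoundedLatticeHom.ofPoints_injective
      ((CompatiblePoints.fst_surjective hg).comp ULift.down_surjective),
    BoundedLatticeHom.ofPoints_injective
      ((CompatiblePoints.snd_surjective hf).comp ULift.down_surjective),
    hcomm, ?_⟩
  refine Set.Subset.antisymm ?_
    (Set.range_subset_iff.2 fun c => ⟨⟨f c, rfl⟩, g c, (hcomm c).symm⟩)
  rintro _ ⟨⟨a, rfl⟩, b, hba⟩
  obtain ⟨c, rfl⟩ := BoundedLatticeHom.exists_eq_of_forall_iff hg fun x y hxy =>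
    (Set.ext_iff.1 hba (ULift.up ⟨(x, y), hxy⟩)).symm
  exact ⟨c, rfl⟩
end

section
/- Let P be a Boolean algebra, k a natural number, and D₀, …, D_{k−1} ultrafilters of P none of which contains an atom of P. Then there exist a Boolean algebra B, an injective Boolean algebra homomorphism e : P → B, and pairwise distinct elements a₀, …, a_{k−1} of B such that: (i) B is generated as a Boolean algebra by (range e) ∪ {a₀, …, a_{k−1}}; (ii) each a_ℓ is an atom of B; (iii) for every b ∈ P and every ℓ < k, a_ℓ ≤ e b if and only if b ∈ D_ℓ; and (iv) for every b ∈ P, e b is an atom of B if and only if b is an atom of P. -/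
universe u

/-- An ultrafilter of a Boolean algebra: upward closed, closed under meets, omitting `⊥`,
and containing `b` or `bᶜ` for every `b`. -/
def IsUltrafilterOf {P : Type*} [BooleanAlgebra P] (F : Set P) : Prop :=
  (∀ a ∈ F, ∀ b : P, a ≤ b → b ∈ F) ∧ (∀ a ∈ F, ∀ b ∈ F, a ⊓ b ∈ F) ∧
    (⊥ : P) ∉ F ∧ ∀ b : P, b ∈ F ∨ bᶜ ∈ F

/-- Given finitely many ultrafilters of a Boolean algebra `P`, none containing an atom,
one can extend `P` by adjoining a new atom below each ultrafilter, generating the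
extension and preserving exactly the atoms of `P`. -/
theorem exists_extension_adjoining_atoms {P : Type u} [BooleanAlgebra P]
    (k : ℕ) (D : Fin k → Set P)
    (hD : ∀ ℓ : Fin k, IsUltrafilterOf (D ℓ))
    (hDatom : ∀ ℓ : Fin k, ∀ b ∈ D ℓ, ¬ IsAtom b) :
    ∃ (B : Type u) (_ : BooleanAlgebra B)
      (e : BoundedLatticeHom P B) (a : Fin k → B),
      Function.Injective e ∧ Function.Injective a ∧
      genBA (Set.range ⇑e ∪ Set.range a) = Set.univ ∧
      (∀ ℓ : Fin k, IsAtom (a ℓ)) ∧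
      (∀ (b : P) (ℓ : Fin k), a ℓ ≤ e b ↔ b ∈ D ℓ) ∧
      ∀ b : P, IsAtom (e b) ↔ IsAtom b := by
  classical
  have hup : ∀ ℓ, ∀ x ∈ D ℓ, ∀ y : P, x ≤ y → y ∈ D ℓ := fun ℓ => (hD ℓ).1
  have hinf : ∀ ℓ, ∀ x ∈ D ℓ, ∀ y ∈ D ℓ, x ⊓ y ∈ D ℓ := fun ℓ => (hD ℓ).2.1
  have hbot : ∀ ℓ, (⊥ : P) ∉ D ℓ := fun ℓ => (hD ℓ).2.2.1
  have htot : ∀ ℓ, ∀ b : P, b ∈ D ℓ ∨ bᶜ ∈ D ℓ := fun ℓ => (hD ℓ).2.2.2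
  have htop : ∀ ℓ, (⊤ : P) ∈ D ℓ := by
    intro ℓ
    rcases htot ℓ ⊥ with h | h
    · exact absurd h (hbot ℓ)
    · simpa using h
  have hsupD : ∀ ℓ (b c : P), b ⊔ c ∈ D ℓ ↔ b ∈ D ℓ ∨ c ∈ D ℓ := by
    intro ℓ b c
    constructor
    · intro h
      by_contra hc
      push_neg at hc
      have hb' : bᶜ ∈ D ℓ := (htot ℓ b).resolve_left hc.1
      have hc' : cᶜ ∈ D ℓ := (htot ℓ c).resolve_left hc.2
      have h1 : (b ⊔ c) ⊓ (bᶜ ⊓ cᶜ) ∈ D ℓ := hinf ℓ _ h _ (hinf ℓ _ hb' _ hc')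
      have h2 : (b ⊔ c) ⊓ (bᶜ ⊓ cᶜ) = ⊥ := by rw [← compl_sup]; exact inf_compl_eq_bot
      exact hbot ℓ (h2 ▸ h1)
    · rintro (h | h)
      · exact hup ℓ b h _ le_sup_left
      · exact hup ℓ c h _ le_sup_right
  have hinfD : ∀ ℓ (b c : P), b ⊓ c ∈ D ℓ ↔ b ∈ D ℓ ∧ c ∈ D ℓ := by
    intro ℓ b c
    constructor
    · intro h
      exact ⟨hup ℓ _ h b inf_le_left, hup ℓ _ h c inf_le_right⟩
    · intro ⟨h1, h2⟩; exact hinf ℓ b h1 c h2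
  -- the extension
  let B := P × (Fin k → Prop)
  let eF : P → B := fun b => (b, fun m => b ∈ D m)
  let a : Fin k → B := fun ℓ => (⊥, fun m => m = ℓ)
  let e : BoundedLatticeHom P B :=
    { toFun := eF
      map_sup' := by
        intro b c
        refine Prod.ext rfl (funext fun m => propext ?_)
        exact hsupD m b c
      map_inf' := by
        intro b c
        refine Prod.ext rfl (funext fun m => propext ?_)
        exact hinfD m b c
      map_top' := by
        refine Prod.ext rfl (funext fun m => propext ?_)
        exact iff_of_true (htop m) trivial
      map_bot' := by
        refine Prod.ext rfl (funext fun m => propext ?_)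
        exact iff_of_false (hbot m) (fun h => h) }
  have ecoe : ∀ x : P, e x = eF x := fun _ => rfl
  have einj : Function.Injective e := by
    intro x y h
    exact congrArg Prod.fst h
  refine ⟨B, inferInstance, e, a, einj, ?_, ?_, ?_, ?_, ?_⟩
  · -- a injective
    intro ℓ ℓ' h
    have := congrFun (congrArg Prod.snd h) ℓ
    exact cast this rfl
  · -- generation
    refine Set.eq_univ_of_forall ?_
    rintro ⟨b, s⟩
    intro S hS
    obtain ⟨⟨hbotS, htopS, hinfS, hsupS, hcomplS⟩, hXS⟩ := hS
    have heS : ∀ x : P, eF x ∈ S := fun x => hXS (Or.inl ⟨x, rfl⟩)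
    have haS : ∀ ℓ, a ℓ ∈ S := fun ℓ => hXS (Or.inr ⟨ℓ, rfl⟩)
    have hFin : ∀ F : Finset (Fin k), ((⊥, fun m => (m ∈ F : Prop)) : B) ∈ S := by
      intro F
      induction F using Finset.induction_on with
      | empty =>
        have : ((⊥, fun m => (m ∈ (∅ : Finset (Fin k)) : Prop)) : B) = ⊥ :=
          Prod.ext rfl (funext fun m => propext
            (by show m ∈ (∅ : Finset (Fin k)) ↔ False; simp))
        rw [this]; exact hbotS
      | insert ℓ F hni ih =>
        have : ((⊥, fun m => (m ∈ insert ℓ F : Prop)) : B)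
            = a ℓ ⊔ (⊥, fun m => (m ∈ F : Prop)) := by
          refine Prod.ext (by show (⊥ : P) = ⊥ ⊔ ⊥; simp) (funext fun m => propext ?_)
          show m ∈ insert ℓ F ↔ (m = ℓ ∨ m ∈ F)
          exact Finset.mem_insert
        rw [this]
        exact hsupS _ (haS ℓ) _ ih
    have hsS : ((⊥, s) : B) ∈ S := by
      have h1 : ((⊥, s) : B) = (⊥, fun m => (m ∈ Finset.univ.filter (fun m => s m) : Prop)) :=
        Prod.ext rfl (funext fun m => propext (by simp))
      rw [h1]; exact hFin _
    have huS : ((⊥, fun _ => True) : B) ∈ S := by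
      have h1 : ((⊥, fun _ => True) : B) = (⊥, fun m => (m ∈ (Finset.univ : Finset (Fin k)) : Prop)) :=
        Prod.ext rfl (funext fun m => propext (by simp))
      rw [h1]; exact hFin _
    have key : ((b, s) : B) = (eF b ⊓ ((⊥, fun _ => True) : B)ᶜ) ⊔ (⊥, s) := by
      refine Prod.ext (by show b = (b ⊓ (⊥ : P)ᶜ) ⊔ ⊥; simp) (funext fun m => propext ?_)
      show s m ↔ (b ∈ D m ∧ ¬True) ∨ s m
      tauto
    rw [key]
    exact hsupS _ (hinfS _ (heS b) _ (hcomplS _ huS)) _ hsS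
  · -- atoms
    intro ℓ
    constructor
    · intro h
      have := congrFun (congrArg Prod.snd h) ℓ
      exact cast this rfl
    · intro c hc
      have hle := hc.le
      have hne : c ≠ a ℓ := hc.ne
      have h1 : c.1 = ⊥ := le_bot_iff.mp hle.1
      have h2 : c.2 ≤ fun m => m = ℓ := hle.2
      by_cases hc2 : c.2 ℓ
      · exfalso
        apply hne
        refine Prod.ext h1 (funext fun m => propext ⟨fun h => h2 m h, fun h => by rw [h]; exact hc2⟩)
      · refine Prod.ext h1 (funext fun m => propext ⟨fun h => ?_, False.elim⟩)
        exact hc2 ((h2 m h) ▸ h)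
  · -- a ℓ ≤ e b ↔ b ∈ D ℓ
    intro b ℓ
    constructor
    · intro h
      exact h.2 ℓ rfl
    · intro hb
      exact ⟨bot_le, fun m hm => by rw [hm]; exact hb⟩
  · -- atom preservation
    intro b
    constructor
    · intro hab
      constructor
      · intro hbb
        exact hab.1 (by rw [hbb]; exact map_bot e)
      · intro x hx
        have h1 : e x ≤ e b := ⟨hx.le, fun m hm => hup m x hm b hx.le⟩
        have h2 : e x ≠ e b := fun h => hx.ne (einj h)
        have h3 := hab.2 _ (lt_of_le_of_ne h1 h2)
        exact einj (h3.trans (map_bot e).symm)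
    · intro hb
      have hne : ∀ m, b ∉ D m := fun m hm => hDatom m b hm hb
      constructor
      · intro h
        exact hb.1 (congrArg Prod.fst h)
      · intro c hc
        have h2 : c.2 = (⊥ : Fin k → Prop) :=
          funext fun m => propext ⟨fun h => absurd (hc.le.2 m h) (hne m), False.elim⟩
        rcases lt_or_eq_of_le (hc.le.1 : c.1 ≤ b) with h1 | h1
        · exact Prod.ext (hb.2 _ h1) h2
        · exfalso
          apply hc.ne
          refine Prod.ext h1 (funext fun m => propext ?_)
          exact ⟨fun h => absurd (hc.le.2 m h) (hne m), fun h => absurd h (hne m)⟩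
end

section
/- Let k be a natural number and let X be a set of cardinality ℵ_k. Let cl : Set X → Set X be a closure operator (A ⊆ cl A for all A; A ⊆ B implies cl A ⊆ cl B; cl (cl A) = cl A) that is finitary (cl A is the union of cl A₀ over all finite subsets A₀ ⊆ A) and locally finite (cl A is finite whenever A is finite). Then there exists a subset S ⊆ X of cardinality k + 1 that is independent, i.e., for every a ∈ S, a ∉ cl (S \ {a}). -/
universe u

open Cardinal

/-- The Laskowski–Shelah combinatorial fact: a finitary, locally finite closure operator
on a set of size `ℵ_k` admits an independent subset of size `k + 1`. -/
theorem exists_independent_subset_of_aleph {k : ℕ} {X : Type u}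
    (hcard : #X = Cardinal.aleph k)
    (cl : Set X → Set X)
    (hext : ∀ A : Set X, A ⊆ cl A)
    (hmono : ∀ A B : Set X, A ⊆ B → cl A ⊆ cl B)
    (hidem : ∀ A : Set X, cl (cl A) = cl A)
    (hfinitary : ∀ A : Set X, cl A = ⋃ (F : Finset X) (_ : ↑F ⊆ A), cl ↑F)
    (hlocfin : ∀ A : Set X, A.Finite → (cl A).Finite) :
    ∃ S : Set X, #S = k + 1 ∧ ∀ a ∈ S, a ∉ cl (S \ {a}) := by
  classical
  induction k generalizing X with
  | zero =>
    -- X is infinite, cl ∅ is finite, pick a ∉ cl ∅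
    have hinf : Infinite X := by
      rw [Cardinal.infinite_iff, hcard, Nat.cast_zero, aleph_zero]
    obtain ⟨a, ha⟩ := ((hlocfin ∅ Set.finite_empty).infinite_compl).nonempty
    refine ⟨{a}, by simp, ?_⟩
    intro b hb
    rw [Set.mem_singleton_iff] at hb
    subst hb
    simpa using ha
  | succ k ih =>
    -- get a closed subset Y of size aleph k
    have hle : aleph k ≤ #X := by
      rw [hcard]
      exact aleph_le_aleph.mpr (by exact_mod_cast Nat.le_succ k)
    obtain ⟨A, hA⟩ := Cardinal.le_mk_iff_exists_set.mp hle
    have hAinf : Infinite A := by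
      rw [Cardinal.infinite_iff, hA]; exact aleph0_le_aleph _
    set Y : Set X := cl A with hY
    -- #Y = aleph k
    have hYsub : cl A ⊆ ⋃ (F : Finset A), cl ↑(F.image Subtype.val) := by
      rw [hfinitary A]
      intro x hx
      simp only [Set.mem_iUnion] at hx ⊢
      obtain ⟨F, hF, hxF⟩ := hx
      refine ⟨F.subtype (· ∈ A), ?_⟩
      refine hmono _ _ ?_ hxF
      intro y hy
      simp only [Finset.coe_image, Set.mem_image, Finset.mem_coe,
        Finset.mem_subtype] at hy ⊢
      exact ⟨⟨y, hF hy⟩, hy, rfl⟩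
    have hYcard : #Y = aleph k := by
      refine le_antisymm ?_ (hA ▸ Cardinal.mk_le_mk_of_subset (hext A))
      calc #Y ≤ #(⋃ (F : Finset A), cl ↑(F.image Subtype.val)) :=
            Cardinal.mk_le_mk_of_subset hYsub
        _ ≤ #(Finset A) * ⨆ (F : Finset A), #(cl ↑(F.image Subtype.val) : Set X) :=
            Cardinal.mk_iUnion_le _
        _ ≤ aleph k * aleph k := by
            refine mul_le_mul' ?_ ?_
            · rw [mk_finset_of_infinite, hA]
            · refine ciSup_le fun F => ?_
              exact le_trans (Cardinal.lt_aleph0_iff_set_finite.mpr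
                (hlocfin _ (F.image Subtype.val).finite_toSet)).le (aleph0_le_aleph _)
        _ = aleph k := Cardinal.mul_eq_self (aleph0_le_aleph _)
    -- Y is closed
    have hYcl : cl Y = Y := hidem A
    -- pick a ∉ Y
    have hne : Y ≠ Set.univ := by
      intro h
      rw [h, Cardinal.mk_univ, hcard] at hYcard
      have h2 : ((k + 1 : ℕ) : Ordinal) ≤ (k : ℕ) := aleph_le_aleph.mp hYcard.le
      exact absurd (by exact_mod_cast h2) (Nat.not_succ_le_self k)
    obtain ⟨a, haY⟩ := Set.ne_univ_iff_exists_notMem _ |>.mp hne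
    -- relativized closure operator on Y
    set cl' : Set Y → Set Y := fun B => {y : Y | ↑y ∈ cl (Subtype.val '' B ∪ {a})}
      with hcl'
    have hext' : ∀ B : Set Y, B ⊆ cl' B := by
      intro B y hy
      exact hext _ (Or.inl ⟨y, hy, rfl⟩)
    have hmono' : ∀ B C : Set Y, B ⊆ C → cl' B ⊆ cl' C := by
      intro B C hBC y hy
      exact hmono _ _ (Set.union_subset_union_left _ (Set.image_mono hBC)) hy
    have hkey : ∀ B : Set Y, Subtype.val '' (cl' B) ∪ {a} ⊆ cl (Subtype.val '' B ∪ {a}) := by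
      intro B
      rintro x (⟨y, hy, rfl⟩ | hx)
      · exact hy
      · exact hext _ (Or.inr hx)
    have hidem' : ∀ B : Set Y, cl' (cl' B) = cl' B := by
      intro B
      refine subset_antisymm ?_ (hext' _)
      intro y hy
      have : ↑y ∈ cl (cl (Subtype.val '' B ∪ {a})) := hmono _ _ (hkey B) hy
      rwa [hidem] at this
    have hfin' : ∀ B : Set Y, cl' B = ⋃ (F : Finset Y) (_ : ↑F ⊆ B), cl' ↑F := by
      intro B
      refine subset_antisymm ?_ ?_
      · intro y hy
        have : ↑y ∈ ⋃ (G : Finset X) (_ : ↑G ⊆ Subtype.val '' B ∪ {a}), cl ↑G := by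
          rw [← hfinitary]; exact hy
        simp only [Set.mem_iUnion] at this
        obtain ⟨G, hG, hyG⟩ := this
        set F : Finset Y := G.subtype (· ∈ Y) with hF
        have hFB : (↑F : Set Y) ⊆ B := by
          rintro ⟨x, hxY⟩ hx
          simp only [hF, Finset.mem_coe, Finset.mem_subtype] at hx
          rcases hG hx with ⟨b, hb, hbx⟩ | hxa
          · rwa [show (⟨x, hxY⟩ : Y) = b from Subtype.ext hbx.symm]
          · exact absurd (hxa ▸ hxY) haY
        refine Set.mem_iUnion.mpr ⟨F, Set.mem_iUnion.mpr ⟨hFB, ?_⟩⟩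
        refine hmono _ _ ?_ hyG
        intro x hx
        by_cases hxa : x = a
        · exact Or.inr (hxa ▸ rfl)
        · rcases hG hx with ⟨b, hb, hbx⟩ | h
          · refine Or.inl ⟨b, ?_, hbx⟩
            simp only [hF, Finset.mem_coe, Finset.mem_subtype]
            rw [hbx]; exact hx
          · exact absurd h hxa
      · exact Set.iUnion_subset fun F => Set.iUnion_subset fun hF => hmono' _ _ hF
    have hlocfin' : ∀ B : Set Y, B.Finite → (cl' B).Finite := by
      intro B hB
      have : cl' B ⊆ Subtype.val ⁻¹' (cl (Subtype.val '' B ∪ {a})) := fun y hy => hy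
      exact Set.Finite.subset
        (Set.Finite.preimage (Subtype.val_injective.injOn)
          (hlocfin _ ((hB.image _).union (Set.finite_singleton a)))) this
    obtain ⟨S', hS'card, hS'ind⟩ := ih (X := Y) hYcard cl' hext' hmono' hidem' hfin' hlocfin'
    -- assemble
    refine ⟨insert a (Subtype.val '' S'), ?_, ?_⟩
    · have hanotin : a ∉ Subtype.val '' S' := by
        rintro ⟨y, _, rfl⟩; exact haY y.2
      rw [Cardinal.mk_insert hanotin,
        Cardinal.mk_image_eq_of_injOn _ _ (Subtype.val_injective.injOn), hS'card]
      push_cast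
      ring
    · intro b hb hbcl
      rcases hb with rfl | ⟨y, hy, rfl⟩
      · -- b = a
        have h1 : insert b (Subtype.val '' S') \ {b} ⊆ Y := by
          intro x hx
          rcases hx.1 with rfl | ⟨z, _, rfl⟩
          · exact absurd rfl hx.2
          · exact z.2
        have : b ∈ cl Y := hmono _ _ h1 hbcl
        rw [hYcl] at this
        exact haY this
      · -- b = ↑y
        have hay : a ≠ (y : X) := fun h => haY (h ▸ y.2)
        have hset : insert a (Subtype.val '' S') \ {(y : X)}
            = Subtype.val '' (S' \ {y}) ∪ {a} := by
          ext x
          simp only [Set.mem_diff, Set.mem_insert_iff, Set.mem_union, Set.mem_image,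
            Set.mem_singleton_iff, Set.mem_diff]
          constructor
          · rintro ⟨rfl | ⟨z, hz, rfl⟩, hne⟩
            · exact Or.inr rfl
            · exact Or.inl ⟨z, ⟨hz, fun h => hne (by rw [h])⟩, rfl⟩
          · rintro (⟨z, ⟨hz, hzy⟩, rfl⟩ | rfl)
            · exact ⟨Or.inr ⟨z, hz, rfl⟩, fun h => hzy (Subtype.ext h)⟩
            · exact ⟨Or.inl rfl, hay⟩
        rw [hset] at hbcl
        exact hS'ind y hy hbcl
end
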